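/- Let 0 < p₀ < p₁ < ∞, d > 0, s₀ − d/p₀ = s₁ − d/p₁, q ∈ (0,∞], and let w ∈ A_∞ be a scalar weight. Consider the weighted Besov-type sequence spaces ḃ_{p,q}^{s,υ}(w) with growth function υ ∈ 𝒢(δ₁, δ₂; ω), δ₂ ≥ δ₁ ≥ 0, 0 ≤ ω ≤ n(δ₂ − δ₁). Then the embedding ḃ_{p₀,q}^{s₀,υ}(w) ↪ ḃ_{p₁,q}^{s₁,υ}(w) holds if and only if there exists C > 0 such that w(Q) ≥ C·2^{−j_Q d} for every dyadic cube Q. -/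

import Mathlib

open MeasureTheory
open scoped BigOperators ENNReal

/-- A dyadic cube `2^{-j}([0,1)^n + k)` in `ℝⁿ`, encoded by its generation `j`
and its position `k`. -/
structure DyadicCube (n : ℕ) where
  j : ℤ
  k : Fin n → ℤ
deriving DecidableEq

namespace DyadicCube

variable {n : ℕ}

/-- The side length `ℓ(Q) = 2^{-j}`. -/
noncomputable def len (Q : DyadicCube n) : ℝ := (2 : ℝ) ^ (-Q.j)

/-- The lower-left corner `x_Q = 2^{-j} k`. -/
noncomputable def corner (Q : DyadicCube n) (i : Fin n) : ℝ := (2 : ℝ) ^ (-Q.j) * Q.k i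

/-- The volume `|Q| = 2^{-jn}`. -/
noncomputable def vol (Q : DyadicCube n) : ℝ := Q.len ^ (n : ℕ)

/-- The cube `Q` as a subset of `ℝⁿ`. -/
noncomputable def toSet (Q : DyadicCube n) : Set (Fin n → ℝ) :=
  {x | ∀ i, Q.corner i ≤ x i ∧ x i < Q.corner i + Q.len}

/-- The Euclidean distance `|x_Q - x_R|` between the corners of two dyadic cubes. -/
noncomputable def cdist (Q R : DyadicCube n) : ℝ :=
  Real.sqrt (∑ i, (Q.corner i - R.corner i) ^ 2)

end DyadicCube

/-- `υ : 𝒟 → (0,∞)` is a `(δ₁, δ₂; ω)`-order growth function: it is positive and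
`υ(Q)/υ(R) ≤ C (1 + |x_Q - x_R|/(ℓ(Q) ∨ ℓ(R)))^ω (|Q|/|R|)^{δ₁}` when `ℓ(Q) ≤ ℓ(R)`,
with exponent `δ₂` in place of `δ₁` when `ℓ(R) < ℓ(Q)`. -/
def IsGrowthFunction (n : ℕ) (δ₁ δ₂ ω : ℝ) (υ : DyadicCube n → ℝ) : Prop :=
  (∀ Q, 0 < υ Q) ∧ ∃ C : ℝ, 0 < C ∧ ∀ Q R : DyadicCube n,
    υ Q / υ R ≤ C * (1 + Q.cdist R / max Q.len R.len) ^ ω *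
      (if Q.len ≤ R.len then (Q.vol / R.vol) ^ δ₁ else (Q.vol / R.vol) ^ δ₂)

attribute [local instance] Classical.propDecidable

/-- The `ℓ^q`-norm (over `ℤ`) of a family of extended nonnegative reals,
with the usual modification (supremum) when `q = ∞`. -/
noncomputable def lqNorm (q : ℝ≥0∞) (a : ℤ → ℝ≥0∞) : ℝ≥0∞ :=
  if q = ⊤ then ⨆ j, a j else (∑' j, a j ^ q.toReal) ^ (1 / q.toReal)

/-- The axis-parallel cube in `ℝⁿ` with lower-left corner `c` and side length `r`. -/
def cubeSet (n : ℕ) (c : Fin n → ℝ) (r : ℝ) : Set (Fin n → ℝ) :=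
  {x | ∀ i, c i ≤ x i ∧ x i < c i + r}

/-- The Muckenhoupt `A_∞` condition:
`sup_Q (⨍_Q w) exp(⨍_Q log w⁻¹) < ∞` over all cubes `Q`. -/
def IsAinfty (n : ℕ) (w : (Fin n → ℝ) → ℝ) : Prop :=
  ∃ A : ℝ, 0 < A ∧ ∀ (c : Fin n → ℝ) (r : ℝ), 0 < r →
    MeasureTheory.IntegrableOn w (cubeSet n c r) MeasureTheory.volume ∧
    MeasureTheory.IntegrableOn (fun x => Real.log (w x)) (cubeSet n c r)
      MeasureTheory.volume ∧
    (⨍ x in cubeSet n c r, w x) *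
      Real.exp (⨍ x in cubeSet n c r, Real.log (w x)⁻¹) ≤ A

/-- The weighted Besov-type sequence space quasi-norm
`‖t‖_{ḃ^{s,υ}_{p,q}(w)} = sup_P υ(P)⁻¹ (∑_{j ≥ j_P} 2^{j(s+n/2)q}
[∑_{Q ∈ 𝒟_j, Q ⊆ P} |t_Q|^p w(Q) |Q|^{-p/2}]^{q/p})^{1/q}`. -/
noncomputable def wbNorm (n : ℕ) (s p : ℝ) (q : ℝ≥0∞) (υ : DyadicCube n → ℝ)
    (w : (Fin n → ℝ) → ℝ) (t : DyadicCube n → ℝ) : ℝ≥0∞ :=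
  ⨆ P : DyadicCube n, (ENNReal.ofReal (υ P))⁻¹ *
    lqNorm q (fun j : ℤ => if P.j ≤ j then
      ENNReal.ofReal ((2 : ℝ) ^ ((j : ℝ) * (s + n / 2))) *
        (∑' Q : DyadicCube n, if Q.j = j ∧ Q.toSet ⊆ P.toSet then
            ENNReal.ofReal (|t Q| ^ p * Q.vol ^ (-(p / 2))) *
              ∫⁻ x in Q.toSet, ENNReal.ofReal (w x) ∂MeasureTheory.volume
          else 0) ^ (1 / p)
      else 0)

lemma lqNorm_mono {q : ℝ≥0∞} {f g : ℤ → ℝ≥0∞} (h : ∀ j, f j ≤ g j) :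
    lqNorm q f ≤ lqNorm q g := by
  unfold lqNorm
  split_ifs
  · exact iSup_mono h
  · exact ENNReal.rpow_le_rpow (ENNReal.tsum_le_tsum fun j =>
      ENNReal.rpow_le_rpow (h j) ENNReal.toReal_nonneg) (by positivity)

lemma lqNorm_mul_left {q : ℝ≥0∞} (hq : 0 < q) (c : ℝ≥0∞) (f : ℤ → ℝ≥0∞) :
    lqNorm q (fun j => c * f j) = c * lqNorm q f := by
  unfold lqNorm
  split_ifs with h
  · exact (ENNReal.mul_iSup c f).symm
  · have hr : 0 < q.toReal := ENNReal.toReal_pos hq.ne' h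
    have : ∀ j, (c * f j) ^ q.toReal = c ^ q.toReal * f j ^ q.toReal :=
      fun j => ENNReal.mul_rpow_of_nonneg _ _ hr.le
    simp only [this, ENNReal.tsum_mul_left]
    rw [ENNReal.mul_rpow_of_nonneg _ _ (by positivity), ← ENNReal.rpow_mul,
      mul_one_div_cancel hr.ne', ENNReal.rpow_one]

lemma lqNorm_single {q : ℝ≥0∞} (hq : 0 < q) (f : ℤ → ℝ≥0∞) (j₀ : ℤ)
    (h : ∀ j, j ≠ j₀ → f j = 0) : lqNorm q f = f j₀ := by
  unfold lqNorm
  split_ifs with hT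
  · refine le_antisymm (iSup_le fun j => ?_) (le_iSup f j₀)
    rcases eq_or_ne j j₀ with rfl | hj
    · exact le_rfl
    · simp [h j hj]
  · have hr : 0 < q.toReal := ENNReal.toReal_pos hq.ne' hT
    rw [tsum_eq_single j₀ (fun j hj => by rw [h j hj]; exact ENNReal.zero_rpow_of_pos hr),
      ← ENNReal.rpow_mul, mul_one_div_cancel hr.ne', ENNReal.rpow_one]

lemma tsum_rpow_le {ι : Type*} (g : ι → ℝ≥0∞) {r : ℝ} (hr : 1 ≤ r) :
    ∑' i, g i ^ r ≤ (∑' i, g i) ^ r := by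
  have hr0 : (0:ℝ) < r := lt_of_lt_of_le one_pos hr
  set S := ∑' i, g i with hSdef
  rcases eq_or_ne S 0 with hS | hS
  · have hz : ∀ i, g i = 0 := fun i => le_antisymm (hS ▸ ENNReal.le_tsum i) (by positivity)
    simp [hz, ENNReal.zero_rpow_of_pos hr0]
  rcases eq_or_ne S ⊤ with hS' | hS'
  · rw [hS', ENNReal.top_rpow_of_pos hr0]; exact le_top
  have key : ∀ i, g i ^ r ≤ S ^ (r - 1) * g i := by
    intro i
    have hgi : g i ≤ S := ENNReal.le_tsum i
    rcases eq_or_ne (g i) 0 with h0 | h0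
    · simp [h0, ENNReal.zero_rpow_of_pos hr0]
    · have hgt : g i ≠ ⊤ := fun h => hS' (top_le_iff.mp (h ▸ hgi))
      calc g i ^ r = g i ^ (r - 1) * g i ^ (1:ℝ) := by
            rw [← ENNReal.rpow_add _ _ h0 hgt]; ring_nf
        _ ≤ S ^ (r-1) * g i := by
            rw [ENNReal.rpow_one]
            exact mul_le_mul_left (ENNReal.rpow_le_rpow hgi (by linarith)) _
  calc ∑' i, g i ^ r ≤ ∑' i, S ^ (r-1) * g i := ENNReal.tsum_le_tsum key
    _ = S ^ (r-1) * S := by rw [ENNReal.tsum_mul_left]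
    _ = S ^ ((r-1)+1) := by rw [ENNReal.rpow_add _ _ hS hS', ENNReal.rpow_one]
    _ = S ^ r := by ring_nf
-- helper block 2: geometry & weight integral
namespace DyadicCube
variable {n : ℕ}

lemma len_pos (Q : DyadicCube n) : 0 < Q.len := zpow_pos (by norm_num) _

lemma toSet_eq_cubeSet (Q : DyadicCube n) : Q.toSet = cubeSet n Q.corner Q.len := rfl

lemma toSet_eq_pi (Q : DyadicCube n) :
    Q.toSet = Set.pi Set.univ (fun i => Set.Ico (Q.corner i) (Q.corner i + Q.len)) := by
  ext x; simp [toSet, Set.mem_pi, Set.mem_Ico]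

lemma volume_toSet_pos (Q : DyadicCube n) : 0 < volume Q.toSet := by
  rw [toSet_eq_pi, volume_pi_pi]
  have h : ∀ i : Fin n, volume (Set.Ico (Q.corner i) (Q.corner i + Q.len))
      = ENNReal.ofReal Q.len := by
    intro i; rw [Real.volume_Ico]; ring_nf
  simp only [h, Finset.prod_const]
  exact ENNReal.pow_pos (ENNReal.ofReal_pos.mpr Q.len_pos) _

lemma corner_mem_toSet (Q : DyadicCube n) : (Q.corner : Fin n → ℝ) ∈ Q.toSet :=
  fun i => ⟨le_rfl, lt_add_of_pos_right _ Q.len_pos⟩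

end DyadicCube

section Weight
variable {n : ℕ} {w : (Fin n → ℝ) → ℝ}

lemma wInt_lt_top (hw : IsAinfty n w) (Q : DyadicCube n) :
    (∫⁻ x in Q.toSet, ENNReal.ofReal (w x) ∂volume) < ⊤ := by
  obtain ⟨A, hA, h⟩ := hw
  have hI : IntegrableOn w (cubeSet n Q.corner Q.len) volume :=
    (h Q.corner Q.len Q.len_pos).1
  have := hI.2
  rw [HasFiniteIntegral] at this
  refine lt_of_le_of_lt (lintegral_mono fun x => ?_) this
  exact Real.ofReal_le_enorm (w x)

lemma wInt_pos (hwmeas : Measurable w)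
    (hwpos : ∀ᵐ x ∂(volume : Measure (Fin n → ℝ)), 0 < w x) (Q : DyadicCube n) :
    0 < (∫⁻ x in Q.toSet, ENNReal.ofReal (w x) ∂volume) := by
  rw [pos_iff_ne_zero]
  intro h0
  have hmeas : Measurable (fun x => ENNReal.ofReal (w x)) :=
    ENNReal.measurable_ofReal.comp hwmeas
  rw [lintegral_eq_zero_iff hmeas] at h0
  have hpos' : ∀ᵐ x ∂(volume.restrict Q.toSet), 0 < w x := ae_restrict_of_ae hwpos
  have : ∀ᵐ x ∂(volume.restrict Q.toSet), False := by
    filter_upwards [h0, hpos'] with x hx hx'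
    simp only [Pi.zero_apply, ENNReal.ofReal_eq_zero] at hx
    exact absurd hx (not_le.mpr hx')
  rw [ae_iff] at this
  simp only [not_false_iff, Set.setOf_true, Measure.restrict_apply_univ] at this
  exact Q.volume_toSet_pos.ne' this
-- helper block 3: real rpow computations
lemma DyadicCube.vol_rpow {n : ℕ} (Q : DyadicCube n) (e : ℝ) :
    Q.vol ^ e = (2:ℝ) ^ ((-(Q.j:ℝ)) * (n:ℝ) * e) := by
  have hlen : Q.len = (2:ℝ) ^ (-(Q.j:ℝ)) := by
    rw [DyadicCube.len, ← Real.rpow_intCast 2 (-Q.j)]; push_cast; ring_nf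
  have hvol : Q.vol = (2:ℝ) ^ ((-(Q.j:ℝ)) * (n:ℝ)) := by
    rw [DyadicCube.vol, hlen, ← Real.rpow_natCast ((2:ℝ) ^ (-(Q.j:ℝ))) n,
      ← Real.rpow_mul (by norm_num)]
  rw [hvol, ← Real.rpow_mul (by norm_num)]

lemma key_back {C Wr tv j p₀ p₁ s₀ s₁ d nn : ℝ}
    (hC : 0 < C) (hp₀ : 0 < p₀) (hpp : p₀ < p₁) (hd : 0 < d)
    (hs : s₀ - d / p₀ = s₁ - d / p₁) (htv : 0 ≤ tv) (hW0 : 0 < Wr)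
    (hW : C * (2:ℝ) ^ (-(j * d)) ≤ Wr) :
    (2:ℝ) ^ (j * (p₁ * (s₁ + nn))) * tv ^ p₁ * Wr ≤
      C ^ (1 - p₁ / p₀) * ((2:ℝ) ^ (j * (p₀ * (s₀ + nn))) * tv ^ p₀ * Wr) ^ (p₁ / p₀) := by
  have hp₁ : 0 < p₁ := hp₀.trans hpp
  have hr1 : 1 < p₁ / p₀ := (one_lt_div hp₀).2 hpp
  set r := p₁ / p₀ with hrdef
  have hr0 : 0 < r := by linarith
  have hp0r : p₀ * r = p₁ := by rw [hrdef]; field_simp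
  rcases eq_or_lt_of_le htv with h0 | htv'
  · rw [← h0]
    rw [Real.zero_rpow hp₀.ne', Real.zero_rpow hp₁.ne']
    simp only [mul_zero, zero_mul]
    rw [Real.zero_rpow hr0.ne']
    simp
  have hCW : 0 < C * (2:ℝ) ^ (-(j*d)) := by positivity
  have hexp : d * (r - 1) = p₁ * (s₀ - s₁) := by
    have h1 : s₀ - s₁ = d/p₀ - d/p₁ := by linarith
    rw [h1, hrdef]; field_simp
  have claim : Wr ≤ C ^ (1-r) * ((2:ℝ) ^ (j * (p₁ * (s₀ - s₁))) * Wr ^ r) := by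
    have h2 : Wr ^ (1 - r) ≤ C ^ (1-r) * (2:ℝ) ^ (j * (p₁ * (s₀ - s₁))) := by
      calc Wr ^ (1-r) ≤ (C * (2:ℝ)^(-(j*d))) ^ (1-r) :=
            Real.rpow_le_rpow_of_nonpos hCW hW (by linarith)
        _ = C^(1-r) * ((2:ℝ)^(-(j*d)))^(1-r) := Real.mul_rpow hC.le (by positivity)
        _ = C^(1-r) * (2:ℝ)^((-(j*d)) * (1-r)) := by
            rw [← Real.rpow_mul (by norm_num : (0:ℝ) ≤ 2)]
        _ = C^(1-r) * (2:ℝ)^(j * (p₁ * (s₀ - s₁))) := by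
            congr 1
            have he : (-(j*d)) * (1-r) = j * (d * (r-1)) := by ring
            rw [he, hexp]
    calc Wr = Wr ^ (1-r) * Wr ^ r := by
          rw [← Real.rpow_add hW0]; norm_num
      _ ≤ (C^(1-r) * (2:ℝ)^(j*(p₁*(s₀-s₁)))) * Wr ^ r :=
          mul_le_mul_of_nonneg_right h2 (by positivity)
      _ = C^(1-r) * ((2:ℝ)^(j*(p₁*(s₀-s₁))) * Wr^r) := by ring
  calc (2:ℝ) ^ (j * (p₁ * (s₁ + nn))) * tv ^ p₁ * Wr
      = ((2:ℝ) ^ (j * (p₁ * (s₁ + nn))) * tv ^ p₁) * Wr := by ring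
    _ ≤ ((2:ℝ) ^ (j * (p₁ * (s₁ + nn))) * tv ^ p₁) *
          (C ^ (1-r) * ((2:ℝ) ^ (j * (p₁ * (s₀ - s₁))) * Wr ^ r)) :=
        mul_le_mul_of_nonneg_left claim (by positivity)
    _ = C ^ (1-r) * (((2:ℝ) ^ (j * (p₁ * (s₁ + nn))) * (2:ℝ) ^ (j * (p₁ * (s₀ - s₁)))) *
          (tv ^ p₁ * Wr ^ r)) := by ring
    _ = C ^ (1-r) * ((2:ℝ) ^ (j * (p₀ * (s₀ + nn)) * r) * (tv ^ (p₀ * r) * Wr ^ r)) := by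
        rw [← Real.rpow_add (by norm_num : (0:ℝ) < 2), hp0r]
        congr 2
        have : j * (p₀ * (s₀ + nn)) * r = j * (p₀ * r * (s₀ + nn)) := by ring
        rw [this, hp0r]; ring
    _ = C ^ (1 - r) * ((2:ℝ) ^ (j * (p₀ * (s₀ + nn))) * tv ^ p₀ * Wr) ^ r := by
        congr 1
        rw [Real.mul_rpow (by positivity) hW0.le, Real.mul_rpow (by positivity) (by positivity),
          ← Real.rpow_mul (by norm_num : (0:ℝ) ≤ 2), ← Real.rpow_mul htv]
        ring

lemma key_fwd {K Wr j p₀ p₁ s₀ s₁ d : ℝ}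
    (hK : 0 < K) (hp₀ : 0 < p₀) (hpp : p₀ < p₁) (hd : 0 < d)
    (hs : s₀ - d / p₀ = s₁ - d / p₁) (hW0 : 0 < Wr)
    (h : (2:ℝ)^(j*s₁) * Wr^(1/p₁) ≤ K * ((2:ℝ)^(j*s₀) * Wr^(1/p₀))) :
    K ^ (-(p₀*p₁/(p₁-p₀))) * (2:ℝ)^(-(j*d)) ≤ Wr := by
  have hp₁ : 0 < p₁ := hp₀.trans hpp
  set α : ℝ := 1/p₀ - 1/p₁ with hαdef
  have hα : 0 < α := by
    rw [hαdef]; have := one_div_lt_one_div_of_lt hp₀ hpp; linarith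
  have hds : s₀ - s₁ = d * α := by
    have h1 : s₀ - s₁ = d/p₀ - d/p₁ := by linarith
    rw [h1, hαdef]; ring
  have hcancel : (2:ℝ)^(j*s₁) * (2:ℝ)^(-(j*s₁)) = 1 := by
    rw [← Real.rpow_add (by norm_num : (0:ℝ) < 2)]; norm_num
  have step1 : Wr^(1/p₁) ≤ K * (2:ℝ)^(j*(s₀-s₁)) * Wr^(1/p₀) := by
    have e2 : (2:ℝ)^(j*s₀) * (2:ℝ)^(-(j*s₁)) = (2:ℝ)^(j*(s₀-s₁)) := by
      rw [← Real.rpow_add (by norm_num : (0:ℝ) < 2)]; ring_nf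
    calc Wr^(1/p₁) = ((2:ℝ)^(j*s₁) * Wr^(1/p₁)) * (2:ℝ)^(-(j*s₁)) := by
          rw [mul_comm ((2:ℝ)^(j*s₁)) _, mul_assoc, hcancel, mul_one]
      _ ≤ (K * ((2:ℝ)^(j*s₀) * Wr^(1/p₀))) * (2:ℝ)^(-(j*s₁)) :=
          mul_le_mul_of_nonneg_right h (by positivity)
      _ = K * ((2:ℝ)^(j*s₀) * (2:ℝ)^(-(j*s₁))) * Wr^(1/p₀) := by ring
      _ = K * (2:ℝ)^(j*(s₀-s₁)) * Wr^(1/p₀) := by rw [e2]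
  have step2 : Wr^(1/p₁) * Wr^α = Wr^(1/p₀) := by
    rw [← Real.rpow_add hW0]; congr 1; rw [hαdef]; ring
  have hx : 0 < Wr^(1/p₁) := Real.rpow_pos_of_pos hW0 _
  have hc : 0 < K * (2:ℝ)^(j*(d*α)) * Wr^α := by positivity
  have step3 : 1 ≤ K * (2:ℝ)^(j*(d*α)) * Wr^α := by
    have h' : 1 * Wr^(1/p₁) ≤ (K * (2:ℝ)^(j*(d*α)) * Wr^α) * Wr^(1/p₁) := by
      rw [one_mul]
      calc Wr^(1/p₁) ≤ K * (2:ℝ)^(j*(s₀-s₁)) * Wr^(1/p₀) := step1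
        _ = K * (2:ℝ)^(j*(d*α)) * (Wr^(1/p₁) * Wr^α) := by rw [step2, hds]
        _ = (K * (2:ℝ)^(j*(d*α)) * Wr^α) * Wr^(1/p₁) := by ring
    exact (mul_le_mul_iff_left₀ hx).mp h'
  have h5 : 1 / (K * (2:ℝ)^(j*(d*α))) ≤ Wr^α := by
    rw [div_le_iff₀' (by positivity)]
    calc (1:ℝ) ≤ K * (2:ℝ)^(j*(d*α)) * Wr^α := step3
      _ = K * (2:ℝ)^(j*(d*α)) * Wr^α := rfl
  have step4 : (1 / (K * (2:ℝ)^(j*(d*α)))) ^ (1/α) ≤ Wr := by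
    calc (1 / (K * (2:ℝ)^(j*(d*α)))) ^ (1/α) ≤ (Wr^α) ^ (1/α) :=
          Real.rpow_le_rpow (by positivity) h5 (by positivity)
      _ = Wr := by
          rw [← Real.rpow_mul hW0.le, mul_one_div_cancel hα.ne', Real.rpow_one]
  refine le_trans (le_of_eq ?_) step4
  have hinv : 1 / (K * (2:ℝ)^(j*(d*α))) = K^(-1:ℝ) * (2:ℝ)^(-(j*(d*α))) := by
    rw [Real.rpow_neg_one, Real.rpow_neg (by norm_num : (0:ℝ) ≤ 2)]
    field_simp
  have hpp' : p₁ - p₀ ≠ 0 := by linarith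
  have hα' : α = (p₁ - p₀)/(p₀*p₁) := by rw [hαdef]; field_simp
  have eα : (-1:ℝ) * (1/α) = -(p₀*p₁/(p₁-p₀)) := by
    rw [hα', one_div_div]; ring
  have eβ : (-(j*(d*α))) * (1/α) = -(j*d) := by
    field_simp
  rw [hinv, Real.mul_rpow (by positivity) (by positivity),
    ← Real.rpow_mul hK.le, ← Real.rpow_mul (by norm_num : (0:ℝ) ≤ 2), eα, eβ]
-- helper block 4: growth function bound and wbNorm of delta sequence
lemma growth_bound {n : ℕ} {δ₁ δ₂ ω : ℝ} {υ : DyadicCube n → ℝ}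
    (hδ₁ : 0 ≤ δ₁) (hω0 : 0 ≤ ω) (hυpos : ∀ Q, 0 < υ Q) {Cg : ℝ} (hCg : 0 < Cg)
    (hG : ∀ Q R : DyadicCube n,
      υ Q / υ R ≤ Cg * (1 + Q.cdist R / max Q.len R.len) ^ ω *
        (if Q.len ≤ R.len then (Q.vol / R.vol) ^ δ₁ else (Q.vol / R.vol) ^ δ₂))
    {P Q₀ : DyadicCube n} (hj : P.j ≤ Q₀.j) (hsub : Q₀.toSet ⊆ P.toSet) :
    υ Q₀ ≤ (Cg * (1 + Real.sqrt n) ^ ω) * υ P := by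
  have hlen : Q₀.len ≤ P.len := by
    unfold DyadicCube.len
    apply zpow_le_zpow_right₀ (by norm_num : (1:ℝ) ≤ 2)
    omega
  have hPv : 0 < P.vol := pow_pos P.len_pos _
  have hQv : 0 < Q₀.vol := pow_pos Q₀.len_pos _
  have hvolr : Q₀.vol / P.vol ≤ 1 := by
    rw [div_le_one hPv]
    exact pow_le_pow_left₀ Q₀.len_pos.le hlen _
  have hterm2 : (Q₀.vol / P.vol) ^ δ₁ ≤ 1 :=
    Real.rpow_le_one (div_nonneg hQv.le hPv.le) hvolr hδ₁
  have hcorner := hsub Q₀.corner_mem_toSet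
  have hcd : Q₀.cdist P ≤ Real.sqrt n * P.len := by
    have hsum : (∑ i, (Q₀.corner i - P.corner i)^2) ≤ (n : ℝ) * P.len ^ 2 := by
      calc (∑ i, (Q₀.corner i - P.corner i)^2) ≤ ∑ _i : Fin n, P.len ^ 2 := by
            apply Finset.sum_le_sum
            intro i _
            have h1 := (hcorner i).1
            have h2 := (hcorner i).2
            apply sq_le_sq' <;> linarith
        _ = (n : ℝ) * P.len ^ 2 := by
            rw [Finset.sum_const, Finset.card_univ, Fintype.card_fin, nsmul_eq_mul]
    calc Q₀.cdist P ≤ Real.sqrt ((n:ℝ) * P.len ^ 2) := Real.sqrt_le_sqrt hsum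
      _ = Real.sqrt n * P.len := by
          rw [Real.sqrt_mul (by positivity), Real.sqrt_sq P.len_pos.le]
  have hcd0 : 0 ≤ Q₀.cdist P := Real.sqrt_nonneg _
  have hb0 : (0:ℝ) ≤ 1 + Q₀.cdist P / max Q₀.len P.len := by
    have := div_nonneg hcd0 (P.len_pos.le.trans (le_max_right Q₀.len P.len))
    linarith
  have hbase : 1 + Q₀.cdist P / max Q₀.len P.len ≤ 1 + Real.sqrt n := by
    rw [max_eq_right hlen]
    have : Q₀.cdist P / P.len ≤ Real.sqrt n := by
      rw [div_le_iff₀ P.len_pos]; exact hcd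
    linarith
  have hterm1 : (1 + Q₀.cdist P / max Q₀.len P.len) ^ ω ≤ (1 + Real.sqrt n) ^ ω := by
    apply Real.rpow_le_rpow hb0 hbase hω0
  have hG' := hG Q₀ P
  rw [if_pos hlen] at hG'
  have hfinal : υ Q₀ / υ P ≤ Cg * (1 + Real.sqrt n) ^ ω := by
    calc υ Q₀ / υ P ≤ Cg * (1 + Q₀.cdist P / max Q₀.len P.len) ^ ω *
          ((Q₀.vol / P.vol) ^ δ₁) := hG'
      _ ≤ Cg * (1 + Real.sqrt n) ^ ω * 1 := by
          apply mul_le_mul (mul_le_mul_of_nonneg_left hterm1 hCg.le) hterm2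
            (Real.rpow_nonneg (div_nonneg hQv.le hPv.le) _) (by positivity)
      _ = Cg * (1 + Real.sqrt n) ^ ω := mul_one _
  rw [div_le_iff₀ (hυpos P)] at hfinal
  exact hfinal

lemma wbNorm_delta (n : ℕ) (s p : ℝ) (hp : 0 < p) (q : ℝ≥0∞) (hq : 0 < q)
    (υ : DyadicCube n → ℝ) (w : (Fin n → ℝ) → ℝ) (Q₀ : DyadicCube n) :
    wbNorm n s p q υ w (fun Q => if Q = Q₀ then (1:ℝ) else 0) =
      ⨆ P : DyadicCube n, (ENNReal.ofReal (υ P))⁻¹ *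
        (if P.j ≤ Q₀.j ∧ Q₀.toSet ⊆ P.toSet then
          ENNReal.ofReal ((2:ℝ) ^ ((Q₀.j : ℝ) * (s + n / 2))) *
            (ENNReal.ofReal (Q₀.vol ^ (-(p/2))) *
              ∫⁻ x in Q₀.toSet, ENNReal.ofReal (w x) ∂volume) ^ (1/p)
        else 0) := by
  unfold wbNorm
  congr 1; funext P; congr 1
  have htsum : ∀ j : ℤ, (∑' Q : DyadicCube n, if Q.j = j ∧ Q.toSet ⊆ P.toSet then
      ENNReal.ofReal (|if Q = Q₀ then (1:ℝ) else 0| ^ p * Q.vol ^ (-(p / 2))) *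
        ∫⁻ x in Q.toSet, ENNReal.ofReal (w x) ∂volume else 0)
      = if Q₀.j = j ∧ Q₀.toSet ⊆ P.toSet then
          ENNReal.ofReal (Q₀.vol ^ (-(p/2))) *
            ∫⁻ x in Q₀.toSet, ENNReal.ofReal (w x) ∂volume
        else 0 := by
    intro j
    rw [tsum_eq_single Q₀ ?_]
    · have h1 : |if Q₀ = Q₀ then (1:ℝ) else 0| ^ p = 1 := by
        rw [if_pos rfl, abs_one, Real.one_rpow]
      rw [h1, one_mul]
    · intro Q hQ
      simp [hQ, Real.zero_rpow hp.ne']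
  have hfun : (fun j : ℤ => if P.j ≤ j then
      ENNReal.ofReal ((2 : ℝ) ^ ((j : ℝ) * (s + n / 2))) *
        (∑' Q : DyadicCube n, if Q.j = j ∧ Q.toSet ⊆ P.toSet then
            ENNReal.ofReal (|if Q = Q₀ then (1:ℝ) else 0| ^ p * Q.vol ^ (-(p / 2))) *
              ∫⁻ x in Q.toSet, ENNReal.ofReal (w x) ∂volume
          else 0) ^ (1 / p)
      else 0)
      = (fun j : ℤ => if P.j ≤ j then
        ENNReal.ofReal ((2 : ℝ) ^ ((j : ℝ) * (s + n / 2))) *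
          ((if Q₀.j = j ∧ Q₀.toSet ⊆ P.toSet then
            ENNReal.ofReal (Q₀.vol ^ (-(p/2))) *
              ∫⁻ x in Q₀.toSet, ENNReal.ofReal (w x) ∂volume
          else 0) : ℝ≥0∞) ^ (1 / p)
      else 0) := by
    funext j; rw [htsum j]
  rw [hfun, lqNorm_single hq _ Q₀.j ?_]
  · by_cases h1 : P.j ≤ Q₀.j
    · by_cases h2 : Q₀.toSet ⊆ P.toSet
      · rw [if_pos h1, if_pos ⟨rfl, h2⟩, if_pos ⟨h1, h2⟩]
      · rw [if_pos h1, if_neg (by tauto), if_neg (by tauto),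
          ENNReal.zero_rpow_of_pos (by positivity), mul_zero]
    · rw [if_neg h1, if_neg (by tauto)]
  · intro j hj
    have hne : ¬ (Q₀.j = j ∧ Q₀.toSet ⊆ P.toSet) := fun h => hj (h.1.symm)
    by_cases hPk : P.j ≤ j
    · rw [if_pos hPk, if_neg hne, ENNReal.zero_rpow_of_pos (by positivity), mul_zero]
    · rw [if_neg hPk]
-- helper block 5: the ℓ^{p₀} ↪ ℓ^{p₁} step
lemma lq_step {ι : Type*} (g₁ g₀ : ι → ℝ≥0∞) {K' r p₁ p₀ : ℝ} (hr1 : 1 ≤ r)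
    (hp₁ : 0 < p₁) (hK'0 : 0 ≤ K') (hrp : r * (1/p₁) = 1/p₀)
    (hB : ∀ i, g₁ i ≤ ENNReal.ofReal K' * (g₀ i) ^ r) :
    (∑' i, g₁ i) ^ (1/p₁) ≤ ENNReal.ofReal (K' ^ (1/p₁)) * (∑' i, g₀ i) ^ (1/p₀) := by
  calc (∑' i, g₁ i) ^ (1/p₁)
      ≤ (∑' i, ENNReal.ofReal K' * (g₀ i) ^ r) ^ (1/p₁) :=
        ENNReal.rpow_le_rpow (ENNReal.tsum_le_tsum hB) (by positivity)
    _ = (ENNReal.ofReal K' * ∑' i, (g₀ i) ^ r) ^ (1/p₁) := by rw [ENNReal.tsum_mul_left]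
    _ ≤ (ENNReal.ofReal K' * (∑' i, g₀ i) ^ r) ^ (1/p₁) :=
        ENNReal.rpow_le_rpow (mul_le_mul_right (tsum_rpow_le _ hr1) _) (by positivity)
    _ = ENNReal.ofReal (K' ^ (1/p₁)) * ((∑' i, g₀ i) ^ r) ^ (1/p₁) := by
        rw [ENNReal.mul_rpow_of_nonneg _ _ (by positivity : (0:ℝ) ≤ 1/p₁),
          ← ENNReal.ofReal_rpow_of_nonneg hK'0 (by positivity)]
    _ = ENNReal.ofReal (K' ^ (1/p₁)) * (∑' i, g₀ i) ^ (1/p₀) := by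
        rw [← ENNReal.rpow_mul, hrp]
/-- Let `0 < p₀ < p₁ < ∞`, `d > 0`, `s₀ - d/p₀ = s₁ - d/p₁`,
`q ∈ (0,∞]`, `w ∈ A_∞`, and `υ ∈ 𝒢(δ₁, δ₂; ω)` with `δ₂ ≥ δ₁ ≥ 0` and
`0 ≤ ω ≤ n(δ₂ - δ₁)`. Then `ḃ^{s₀,υ}_{p₀,q}(w) ↪ ḃ^{s₁,υ}_{p₁,q}(w)` if and only if
there is `C > 0` with `w(Q) ≥ C 2^{-j_Q d}` for every dyadic cube `Q`. -/
theorem weighted_besov_embedding_iff_lower_bound (n : ℕ) (hn : 0 < n)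
    (p₀ p₁ d s₀ s₁ : ℝ) (hp₀ : 0 < p₀) (hp : p₀ < p₁) (hd : 0 < d)
    (hs : s₀ - d / p₀ = s₁ - d / p₁) (q : ℝ≥0∞) (hq : 0 < q)
    (δ₁ δ₂ ω : ℝ) (hδ₁ : 0 ≤ δ₁) (hδ : δ₁ ≤ δ₂) (hω0 : 0 ≤ ω)
    (hω : ω ≤ (n : ℝ) * (δ₂ - δ₁))
    (υ : DyadicCube n → ℝ) (hυ : IsGrowthFunction n δ₁ δ₂ ω υ)
    (w : (Fin n → ℝ) → ℝ) (hwmeas : Measurable w)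
    (hwpos : ∀ᵐ x ∂(MeasureTheory.volume : MeasureTheory.Measure (Fin n → ℝ)), 0 < w x)
    (hw : IsAinfty n w) :
    (∃ C : ℝ, 0 < C ∧ ∀ t : DyadicCube n → ℝ,
        wbNorm n s₁ p₁ q υ w t ≤ ENNReal.ofReal C * wbNorm n s₀ p₀ q υ w t) ↔
    (∃ C : ℝ, 0 < C ∧ ∀ Q : DyadicCube n,
        ENNReal.ofReal (C * (2 : ℝ) ^ (-(Q.j : ℝ) * d)) ≤
          ∫⁻ x in Q.toSet, ENNReal.ofReal (w x) ∂MeasureTheory.volume) := by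
  have hp₁ : 0 < p₁ := hp₀.trans hp
  obtain ⟨hυpos, Cg, hCg, hG⟩ := hυ
  constructor
  · -- Forward: embedding implies lower bound on w(Q)
    rintro ⟨C, hC, hEmb⟩
    set C' : ℝ := Cg * (1 + Real.sqrt n) ^ ω with hC'def
    have hC' : 0 < C' := by positivity
    refine ⟨(C * C') ^ (-(p₀ * p₁ / (p₁ - p₀))), by positivity, fun Q₀ => ?_⟩
    have hWtop : (∫⁻ x in Q₀.toSet, ENNReal.ofReal (w x) ∂volume) ≠ ⊤ :=
      (wInt_lt_top hw Q₀).ne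
    have hWpos : 0 < (∫⁻ x in Q₀.toSet, ENNReal.ofReal (w x) ∂volume) :=
      wInt_pos hwmeas hwpos Q₀
    set Wr := (∫⁻ x in Q₀.toSet, ENNReal.ofReal (w x) ∂volume).toReal with hWrdef
    have hWr0 : 0 < Wr := ENNReal.toReal_pos hWpos.ne' hWtop
    have hWeq : (∫⁻ x in Q₀.toSet, ENNReal.ofReal (w x) ∂volume) = ENNReal.ofReal Wr :=
      (ENNReal.ofReal_toReal hWtop).symm
    have hnorm := hEmb (fun Q => if Q = Q₀ then (1:ℝ) else 0)
    rw [wbNorm_delta n s₁ p₁ hp₁ q hq υ w Q₀, wbNorm_delta n s₀ p₀ hp₀ q hq υ w Q₀] at hnorm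
    set A₁ := ENNReal.ofReal ((2:ℝ) ^ ((Q₀.j : ℝ) * (s₁ + n / 2))) *
      (ENNReal.ofReal (Q₀.vol ^ (-(p₁/2))) *
        ∫⁻ x in Q₀.toSet, ENNReal.ofReal (w x) ∂volume) ^ (1/p₁) with hA₁def
    set A₀ := ENNReal.ofReal ((2:ℝ) ^ ((Q₀.j : ℝ) * (s₀ + n / 2))) *
      (ENNReal.ofReal (Q₀.vol ^ (-(p₀/2))) *
        ∫⁻ x in Q₀.toSet, ENNReal.ofReal (w x) ∂volume) ^ (1/p₀) with hA₀def
    have hmain : (ENNReal.ofReal (υ Q₀))⁻¹ * A₁ ≤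
        ENNReal.ofReal C * (ENNReal.ofReal C' * ((ENNReal.ofReal (υ Q₀))⁻¹ * A₀)) := by
      refine le_trans ?_ (le_trans hnorm ?_)
      · exact le_iSup_of_le Q₀ (by rw [if_pos ⟨le_rfl, subset_rfl⟩])
      · apply mul_le_mul_right
        refine iSup_le fun P => ?_
        by_cases hP : P.j ≤ Q₀.j ∧ Q₀.toSet ⊆ P.toSet
        · rw [if_pos hP]
          have hg : υ Q₀ ≤ C' * υ P := growth_bound hδ₁ hω0 hυpos hCg hG hP.1 hP.2
          have hrinv : (υ P)⁻¹ ≤ C' * (υ Q₀)⁻¹ := by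
            have h1 : 1 / υ P ≤ C' / υ Q₀ := by
              rw [div_le_div_iff₀ (hυpos P) (hυpos Q₀)]
              linarith [hg]
            simpa [one_div, div_eq_mul_inv] using h1
          have heinv : (ENNReal.ofReal (υ P))⁻¹ ≤
              ENNReal.ofReal C' * (ENNReal.ofReal (υ Q₀))⁻¹ := by
            rw [← ENNReal.ofReal_inv_of_pos (hυpos P), ← ENNReal.ofReal_inv_of_pos (hυpos Q₀),
              ← ENNReal.ofReal_mul hC'.le]
            exact ENNReal.ofReal_le_ofReal hrinv
          calc (ENNReal.ofReal (υ P))⁻¹ * A₀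
              ≤ (ENNReal.ofReal C' * (ENNReal.ofReal (υ Q₀))⁻¹) * A₀ :=
                mul_le_mul_left heinv _
            _ = ENNReal.ofReal C' * ((ENNReal.ofReal (υ Q₀))⁻¹ * A₀) := mul_assoc _ _ _
        · rw [if_neg hP, mul_zero]; exact zero_le
    have ha0 : (ENNReal.ofReal (υ Q₀)) ≠ 0 := (ENNReal.ofReal_pos.mpr (hυpos Q₀)).ne'
    have hAineq : A₁ ≤ ENNReal.ofReal (C * C') * A₀ := by
      have h2 : (ENNReal.ofReal (υ Q₀))⁻¹ * A₁ ≤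
          (ENNReal.ofReal (υ Q₀))⁻¹ * (ENNReal.ofReal (C * C') * A₀) := by
        refine hmain.trans (le_of_eq ?_)
        rw [ENNReal.ofReal_mul hC.le]; ring
      exact (ENNReal.mul_le_mul_iff_right (ENNReal.inv_ne_zero.mpr ENNReal.ofReal_ne_top)
        (ENNReal.inv_ne_top.mpr ha0)).mp h2
    have hv0 : (0:ℝ) < Q₀.vol := pow_pos Q₀.len_pos _
    have hb₁ : (0:ℝ) ≤ Q₀.vol ^ (-(p₁/2)) := Real.rpow_nonneg hv0.le _
    have hb₀ : (0:ℝ) ≤ Q₀.vol ^ (-(p₀/2)) := Real.rpow_nonneg hv0.le _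
    have hA₁eq : A₁ = ENNReal.ofReal ((2:ℝ) ^ ((Q₀.j:ℝ) * (s₁ + n/2)) *
        (Q₀.vol ^ (-(p₁/2)) * Wr) ^ (1/p₁)) := by
      rw [hA₁def, hWeq, ← ENNReal.ofReal_mul hb₁,
        ENNReal.ofReal_rpow_of_nonneg (mul_nonneg hb₁ hWr0.le) (by positivity),
        ← ENNReal.ofReal_mul (by positivity)]
    have hA₀eq : A₀ = ENNReal.ofReal ((2:ℝ) ^ ((Q₀.j:ℝ) * (s₀ + n/2)) *
        (Q₀.vol ^ (-(p₀/2)) * Wr) ^ (1/p₀)) := by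
      rw [hA₀def, hWeq, ← ENNReal.ofReal_mul hb₀,
        ENNReal.ofReal_rpow_of_nonneg (mul_nonneg hb₀ hWr0.le) (by positivity),
        ← ENNReal.ofReal_mul (by positivity)]
    have hreal : (2:ℝ) ^ ((Q₀.j:ℝ) * (s₁ + n/2)) * (Q₀.vol ^ (-(p₁/2)) * Wr) ^ (1/p₁) ≤
        (C * C') * ((2:ℝ) ^ ((Q₀.j:ℝ) * (s₀ + n/2)) * (Q₀.vol ^ (-(p₀/2)) * Wr) ^ (1/p₀)) := by
      have h3 := hAineq
      rw [hA₁eq, hA₀eq, ← ENNReal.ofReal_mul (by positivity)] at h3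
      refine (ENNReal.ofReal_le_ofReal_iff ?_).mp h3
      have : (0:ℝ) ≤ (Q₀.vol ^ (-(p₀/2)) * Wr) ^ (1/p₀) :=
        Real.rpow_nonneg (mul_nonneg hb₀ hWr0.le) _
      positivity
    have e₁ : (2:ℝ) ^ ((Q₀.j:ℝ) * (s₁ + n/2)) * (Q₀.vol ^ (-(p₁/2)) * Wr) ^ (1/p₁) =
        (2:ℝ) ^ ((Q₀.j:ℝ) * (s₁ + (n:ℝ))) * Wr ^ (1/p₁) := by
      rw [Q₀.vol_rpow, Real.mul_rpow (by positivity) hWr0.le,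
        ← Real.rpow_mul (by norm_num : (0:ℝ) ≤ 2), ← mul_assoc,
        ← Real.rpow_add (by norm_num : (0:ℝ) < 2)]
      congr 2
      field_simp
      ring
    have e₀ : (2:ℝ) ^ ((Q₀.j:ℝ) * (s₀ + n/2)) * (Q₀.vol ^ (-(p₀/2)) * Wr) ^ (1/p₀) =
        (2:ℝ) ^ ((Q₀.j:ℝ) * (s₀ + (n:ℝ))) * Wr ^ (1/p₀) := by
      rw [Q₀.vol_rpow, Real.mul_rpow (by positivity) hWr0.le,
        ← Real.rpow_mul (by norm_num : (0:ℝ) ≤ 2), ← mul_assoc,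
        ← Real.rpow_add (by norm_num : (0:ℝ) < 2)]
      congr 2
      field_simp
      ring
    rw [e₁, e₀] at hreal
    have hs' : (s₀ + (n:ℝ)) - d / p₀ = (s₁ + (n:ℝ)) - d / p₁ := by linarith
    have hkey := key_fwd (by positivity : (0:ℝ) < C * C') hp₀ hp hd hs' hWr0 hreal
    rw [hWeq]
    apply ENNReal.ofReal_le_ofReal
    have hexp : (-(Q₀.j:ℝ)) * d = -((Q₀.j:ℝ) * d) := by ring
    rw [hexp]
    exact hkey
  · -- Backward: lower bound on w(Q) implies embedding
    rintro ⟨C, hC, hLB⟩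
    have hr1 : 1 < p₁ / p₀ := (one_lt_div hp₀).2 hp
    have hr0 : (0:ℝ) < p₁ / p₀ := by linarith
    have hKpos : (0:ℝ) < C ^ (1 - p₁/p₀) := Real.rpow_pos_of_pos hC _
    refine ⟨(C ^ (1 - p₁/p₀)) ^ (1/p₁), by positivity, fun t => ?_⟩
    unfold wbNorm
    rw [ENNReal.mul_iSup]
    refine iSup_le fun P => le_iSup_of_le P ?_
    rw [mul_left_comm]
    refine mul_le_mul_right ?_ _
    rw [← lqNorm_mul_left hq]
    refine lqNorm_mono fun j => ?_
    by_cases hj : P.j ≤ j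
    swap
    · simp [if_neg hj]
    simp only [if_pos hj]
    -- Step A: pull the constants into the sums
    have stepA : ∀ (s p : ℝ), 0 < p →
        ENNReal.ofReal ((2:ℝ) ^ ((j:ℝ) * (s + (n:ℝ)/2))) *
          (∑' Q : DyadicCube n, if Q.j = j ∧ Q.toSet ⊆ P.toSet then
              ENNReal.ofReal (|t Q| ^ p * Q.vol ^ (-(p/2))) *
                ∫⁻ x in Q.toSet, ENNReal.ofReal (w x) ∂volume
            else 0) ^ (1/p)
        = (∑' Q : DyadicCube n, if Q.j = j ∧ Q.toSet ⊆ P.toSet then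
              ENNReal.ofReal (((2:ℝ) ^ ((j:ℝ) * (s + (n:ℝ)/2))) ^ p *
                  (|t Q| ^ p * Q.vol ^ (-(p/2)))) *
                ∫⁻ x in Q.toSet, ENNReal.ofReal (w x) ∂volume
            else 0) ^ (1/p) := by
      intro s p hp'
      have hc0 : (0:ℝ) < (2:ℝ) ^ ((j:ℝ) * (s + (n:ℝ)/2)) := by positivity
      have h1 : ENNReal.ofReal ((2:ℝ) ^ ((j:ℝ) * (s + (n:ℝ)/2))) =
          (ENNReal.ofReal (((2:ℝ) ^ ((j:ℝ) * (s + (n:ℝ)/2))) ^ p)) ^ (1/p) := by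
        rw [ENNReal.ofReal_rpow_of_nonneg (by positivity) (by positivity : (0:ℝ) ≤ 1/p),
          ← Real.rpow_mul (by positivity : (0:ℝ) ≤ (2:ℝ) ^ ((j:ℝ) * (s + (n:ℝ)/2))),
          mul_one_div_cancel hp'.ne', Real.rpow_one]
      rw [h1, ← ENNReal.mul_rpow_of_nonneg _ _ (by positivity : (0:ℝ) ≤ 1/p)]
      congr 1
      rw [← ENNReal.tsum_mul_left]
      congr 1
      funext Q
      rw [mul_ite, mul_zero]
      by_cases hQc : Q.j = j ∧ Q.toSet ⊆ P.toSet
      · rw [if_pos hQc, if_pos hQc, ← mul_assoc,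
          ← ENNReal.ofReal_mul (by positivity)]
      · rw [if_neg hQc, if_neg hQc]
    rw [stepA s₁ p₁ hp₁, stepA s₀ p₀ hp₀]
    refine lq_step _ _ hr1.le hp₁ hKpos.le (by field_simp) fun Q => ?_
    by_cases hQc : Q.j = j ∧ Q.toSet ⊆ P.toSet
    swap
    · simp [if_neg hQc, ENNReal.zero_rpow_of_pos hr0]
    simp only [if_pos hQc]
    obtain ⟨hQj, hQsub⟩ := hQc
    have hItop : (∫⁻ x in Q.toSet, ENNReal.ofReal (w x) ∂volume) ≠ ⊤ :=
      (wInt_lt_top hw Q).ne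
    have hIpos : 0 < (∫⁻ x in Q.toSet, ENNReal.ofReal (w x) ∂volume) :=
      wInt_pos hwmeas hwpos Q
    set WrQ := (∫⁻ x in Q.toSet, ENNReal.ofReal (w x) ∂volume).toReal with hWrQdef
    have hWrQ : 0 < WrQ := ENNReal.toReal_pos hIpos.ne' hItop
    have hIeq : (∫⁻ x in Q.toSet, ENNReal.ofReal (w x) ∂volume) = ENNReal.ofReal WrQ :=
      (ENNReal.ofReal_toReal hItop).symm
    have hbound : C * (2:ℝ) ^ (-((j:ℝ) * d)) ≤ WrQ := by
      have h' := (ENNReal.ofReal_le_iff_le_toReal hItop).mp (hLB Q)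
      rw [hQj] at h'
      have hexp : (-(j:ℝ)) * d = -((j:ℝ) * d) := by ring
      rw [hexp] at h'
      exact h'
    have ea : ∀ (s p : ℝ), ((2:ℝ) ^ ((j:ℝ) * (s + (n:ℝ)/2))) ^ p *
        (|t Q| ^ p * Q.vol ^ (-(p/2))) =
        (2:ℝ) ^ ((j:ℝ) * (p * (s + (n:ℝ)))) * |t Q| ^ p := by
      intro s p
      rw [Q.vol_rpow, hQj, ← Real.rpow_mul (by norm_num : (0:ℝ) ≤ 2),
        show (2:ℝ) ^ ((j:ℝ) * (p * (s + (n:ℝ)))) =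
          (2:ℝ) ^ ((j:ℝ) * (s + (n:ℝ)/2) * p) * (2:ℝ) ^ ((-(j:ℝ)) * (n:ℝ) * (-(p/2))) from by
            rw [← Real.rpow_add (by norm_num : (0:ℝ) < 2)]; congr 1; ring]
      ring
    rw [ea s₁ p₁, ea s₀ p₀, hIeq, ← ENNReal.ofReal_mul (by positivity),
      ← ENNReal.ofReal_mul (by positivity),
      ENNReal.ofReal_rpow_of_nonneg (by positivity) hr0.le,
      ← ENNReal.ofReal_mul hKpos.le]
    exact ENNReal.ofReal_le_ofReal
      (key_back hC hp₀ hp hd hs (abs_nonneg _) hWrQ hbound)
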